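/- Reversiblization via balancing functions: Let g : [0,∞) → [0,∞) be a balancing function, i.e. g(t) = t·g(1/t) for all t > 0, and let L ∈ ℒ. Then F_g ∈ ℒ(π); that is, F_g satisfies the detailed balance condition π(x)·F_g(x,y) = π(y)·F_g(y,x) for all x, y ∈ 𝒳. -/

import Mathlib

open Finset

noncomputable section

variable {X : Type*} [Fintype X] [DecidableEq X]

/-- Build a matrix with prescribed off-diagonal entries and diagonal entries
chosen so that every row sums to zero. -/
def rowZero (F : X → X → ℝ) : X → X → ℝ :=
  fun x y => if x = y then -(∑ z ∈ Finset.univ.erase x, F x z) else F x y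

/-- `L` is a Markov infinitesimal generator: nonnegative off-diagonal entries
and zero row sums. -/
def IsGen (L : X → X → ℝ) : Prop :=
  (∀ x y, x ≠ y → 0 ≤ L x y) ∧ (∀ x, ∑ y, L x y = 0)

/-- `L` is a `π`-reversible Markov generator, i.e. `L ∈ ℒ(π)`. -/
def IsRev (π : X → ℝ) (L : X → X → ℝ) : Prop :=
  IsGen L ∧ ∀ x y, π x * L x y = π y * L y x

/-- `π` is a probability distribution with full support. -/
def IsProb (π : X → ℝ) : Prop := (∀ x, 0 < π x) ∧ ∑ x, π x = 1

/-- The `π`-dual `L_π` of `L`: off-diagonal entries `π(y)L(y,x)/π(x)`,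
diagonal entries make row sums zero. -/
def dual (π : X → ℝ) (L : X → X → ℝ) : X → X → ℝ :=
  rowZero (fun x y => π y * L y x / π x)

/-- The `f`-divergence between generators: `Df f π M L = D_f(M‖L)`.
(The convention `0·f(a/0) = 0` holds automatically since `a/0 = 0` and
the factor `L x y = 0` kills the term.) -/
def Df (f : ℝ → ℝ) (π : X → ℝ) (M L : X → X → ℝ) : ℝ :=
  ∑ x, π x * ∑ y ∈ Finset.univ.erase x, L x y * f (M x y / L x y)

/-- The locally-balanced transformation `F_g` of `L`: for `x ≠ y`,
`F_g(x,y) = L(x,y)` if `L(x,y) = L_π(x,y)`;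
`F_g(x,y) = g(0)·L_π(x,y)` if `L(x,y) = 0` (and then `L_π(x,y) > 0`);
`F_g(x,y) = g(L_π(x,y)/L(x,y))·L(x,y)` otherwise;
diagonal entries make row sums zero. -/

lemma rowZero_off (F : X → X → ℝ) {x y : X} (h : x ≠ y) : rowZero F x y = F x y :=
  if_neg h

lemma rowZero_sum (F : X → X → ℝ) (x : X) : ∑ y, rowZero F x y = 0 := by
  rw [← Finset.add_sum_erase _ _ (Finset.mem_univ x)]
  have h1 : rowZero F x x = -(∑ z ∈ Finset.univ.erase x, F x z) := if_pos rfl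
  have h2 : ∑ y ∈ Finset.univ.erase x, rowZero F x y
      = ∑ y ∈ Finset.univ.erase x, F x y := by
    refine Finset.sum_congr rfl fun y hy => ?_
    exact rowZero_off F (Ne.symm (Finset.ne_of_mem_erase hy))
  rw [h1, h2]; ring

def Fg (π : X → ℝ) (g : ℝ → ℝ) (L : X → X → ℝ) : X → X → ℝ :=
  rowZero (fun x y =>
    if L x y = dual π L x y then L x y
    else if L x y = 0 then g 0 * dual π L x y
    else g (dual π L x y / L x y) * L x y)

/-- **Reversiblization via balancing functions** (Section 4):
if `g : [0,∞) → [0,∞)` is a balancing function, i.e. `g(t) = t·g(1/t)` for all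
`t > 0`, and `L ∈ ℒ`, then `F_g ∈ ℒ(π)`; in particular detailed balance
`π(x)F_g(x,y) = π(y)F_g(y,x)` holds for all `x, y`. -/
theorem Fg_reversible (π : X → ℝ) (hπ : IsProb π)
    (g : ℝ → ℝ) (hg_nonneg : ∀ t, 0 ≤ t → 0 ≤ g t)
    (hg_bal : ∀ t : ℝ, 0 < t → g t = t * g (1 / t))
    (L : X → X → ℝ) (hL : IsGen L) :
    IsRev π (Fg π g L) ∧ ∀ x y, π x * Fg π g L x y = π y * Fg π g L y x := by
  obtain ⟨hπpos, -⟩ := hπ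
  obtain ⟨hLoff, -⟩ := hL
  have hdual : ∀ x y : X, x ≠ y → dual π L x y = π y * L y x / π x :=
    fun x y h => rowZero_off _ h
  have hdb : ∀ x y, π x * Fg π g L x y = π y * Fg π g L y x := by
    intro x y
    by_cases hxy : x = y
    · subst hxy; rfl
    have hyx : y ≠ x := Ne.symm hxy
    have hx := hπpos x
    have hy := hπpos y
    have ha := hLoff x y hxy
    have hc := hLoff y x hyx
    rw [Fg, rowZero_off _ hxy, rowZero_off _ hyx, hdual x y hxy, hdual y x hyx]
    by_cases h1 : L x y = π y * L y x / π x
    · have h2 : L y x = π x * L x y / π y := by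
        field_simp at h1 ⊢
        linarith
      rw [if_pos h1, if_pos h2]
      field_simp at h1 ⊢
      linarith
    · rw [if_neg h1]
      have h2 : ¬ (L y x = π x * L x y / π y) := by
        intro h2
        apply h1
        field_simp at h2 ⊢
        linarith
      rw [if_neg h2]
      by_cases h3 : L x y = 0
      · rw [if_pos h3]
        have hc0 : L y x ≠ 0 := by
          intro h
          apply h1
          rw [h3, h]; simp
        rw [if_neg hc0, h3]
        simp only [mul_zero, zero_mul, zero_div]
        field_simp
      · rw [if_neg h3]
        have ha0 : 0 < L x y := lt_of_le_of_ne ha (Ne.symm h3)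
        by_cases h4 : L y x = 0
        · rw [if_pos h4, h4]
          simp only [mul_zero, zero_mul, zero_div]
          field_simp
        · rw [if_neg h4]
          have hc0 : 0 < L y x := lt_of_le_of_ne hc (Ne.symm h4)
          set t : ℝ := (π y * L y x / π x) / L x y with ht
          have htpos : 0 < t := by positivity
          have hinv : (π x * L x y / π y) / L y x = 1 / t := by
            rw [ht]
            field_simp
          rw [hinv, hg_bal t htpos, ht]
          field_simp
  refine ⟨⟨⟨?_, ?_⟩, hdb⟩, hdb⟩
  · intro x y hxy
    rw [Fg, rowZero_off _ hxy, hdual x y hxy]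
    have hx := hπpos x
    have hy := hπpos y
    have ha := hLoff x y hxy
    have hc := hLoff y x (Ne.symm hxy)
    have hb : 0 ≤ π y * L y x / π x := by positivity
    split_ifs with h1 h2
    · exact ha
    · exact mul_nonneg (hg_nonneg 0 le_rfl) hb
    · have ha0 : 0 < L x y := lt_of_le_of_ne ha (Ne.symm h2)
      exact mul_nonneg (hg_nonneg _ (by positivity)) ha
  · intro x
    exact rowZero_sum _ x


end
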